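/- Let q be a prime power and let t be a positive divisor of q² − 1. Then for all integers r, s with 1 ≤ r ≤ (q²−1)/t and 1 ≤ s ≤ (t−1)/(q+1), and for each of the two lengths n = rt and n = rt + 1, there exists a linear code C over 𝔽_{q²} of length n, dimension n − s, and minimum distance s + 1, such that C^{⊥H} ⊆ C. -/

import Mathlib

/-- Hamming weight: the number of nonzero coordinates. -/
noncomputable def wt {F : Type*} [Zero F] {n : ℕ} (x : Fin n → F) : ℕ :=
  Set.ncard {i | x i ≠ 0}

/-- The Hermitian dual code of a linear code C ⊆ (F_{q²})^n. -/
noncomputable def dualH {F : Type*} [Field F] (q n : ℕ) (C : Submodule F (Fin n → F)) :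
    Submodule F (Fin n → F) where
  carrier := {x | ∀ y ∈ C, ∑ i, x i * (y i) ^ q = 0}
  add_mem' := by
    intro a b ha hb y hy
    simp only [Set.mem_setOf_eq] at *
    simp [add_mul, Finset.sum_add_distrib, ha y hy, hb y hy]
  zero_mem' := by
    intro y hy; simp
  smul_mem' := by
    intro c x hx y hy
    simp only [Set.mem_setOf_eq] at *
    simp [smul_eq_mul, mul_assoc, ← Finset.mul_sum, hx y hy]

/-!
The codes are duals of generalized Reed–Solomon codes: for distinct points `α i` and nonzero
weights `v i`, the code `{x | ∑ i, v i * α i ^ j * x i = 0 for all j < s}` has parameters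
`[n, n - s, s + 1]`, and it contains its Hermitian dual as soon as
`∑ i, v i ^ (q + 1) * α i ^ (j * q + k) = 0` for all `j, k < s`.
For `n = r t` take as points `r` cosets of the group of `t`-th roots of unity in `𝔽_{q²}ˣ` and
`v = α`: the required sums are power sums `∑ i, α i ^ m` with `0 < m ≤ s (q + 1) < t`, which
vanish on every coset. For `n = r t + 1` add the point `0` with a weight `η`, and give the
`a`-th coset a constant weight `c a`, so that the sums with `m = j * q + k > 0` still vanish; the
one with `m = 0` reads `η ^ (q + 1) + t ∑ a, c a ^ (q + 1) = 0`, and can be solved since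
`x ↦ x ^ (q + 1)` maps `𝔽_{q²}ˣ` onto `𝔽_qˣ` and `t ≠ 0` in `𝔽_q`.
-/

open Finset Polynomial

section Singleton

variable {F : Type*} [Field F] {n : ℕ}

theorem wt_le_of_forall_le_eq_zero {d : ℕ} (hd : d ≤ n) {x : Fin n → F}
    (hx : ∀ i : Fin n, d ≤ (i : ℕ) → x i = 0) : wt x ≤ d := by
  calc wt x ≤ Set.ncard (Set.range (Fin.castLE hd)) := by
        refine Set.ncard_le_ncard (fun i hi => ?_) (Set.toFinite _)
        by_contra hi'
        exact hi (hx i (not_lt.mp fun h => hi' ⟨⟨i, h⟩, rfl⟩))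
    _ = d := by rw [Set.ncard_range_of_injective (Fin.castLE_injective hd), Nat.card_fin]

theorem exists_ne_zero_wt_le_of_lt_finrank_add (C : Submodule F (Fin n → F)) {d : ℕ}
    (hd : d ≤ n) (hC : n < Module.finrank F C + d) :
    ∃ x ∈ C, x ≠ 0 ∧ wt x ≤ d := by
  let tail : Fin (n - d) → Fin n := fun i => ⟨d + i, by omega⟩
  let restrict := LinearMap.funLeft F F tail ∘ₗ C.subtype
  have hker : LinearMap.ker restrict ≠ ⊥ :=
    LinearMap.ker_ne_bot_of_finrank_lt (by rw [Module.finrank_fin_fun]; omega)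
  obtain ⟨⟨x, hxC⟩, hx, hx0⟩ := (Submodule.ne_bot_iff _).mp hker
  refine ⟨x, hxC, fun h => hx0 (by simp [h]), wt_le_of_forall_le_eq_zero hd fun i hi => ?_⟩
  have := congrFun (LinearMap.mem_ker.mp hx) ⟨i - d, by omega⟩
  simpa [restrict, tail, LinearMap.funLeft, Nat.add_sub_cancel' hi] using this

end Singleton

section GRS

variable {F : Type*} [Field F] {n : ℕ} (α v : Fin n → F) (s : ℕ)

def grsMatrix : Matrix (Fin s) (Fin n) F := Matrix.of fun j i => v i * α i ^ (j : ℕ)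

def grsDual : Submodule F (Fin n → F) := LinearMap.ker (grsMatrix α v s).mulVecLin

variable {α v s}

theorem mem_grsDual {x : Fin n → F} :
    x ∈ grsDual α v s ↔ ∀ j : Fin s, ∑ i, v i * α i ^ (j : ℕ) * x i = 0 := by
  simp [grsDual, grsMatrix, funext_iff, Matrix.mulVec, dotProduct]

theorem sum_mul_eval_eq_zero_of_mem_grsDual {x : Fin n → F} (hx : x ∈ grsDual α v s)
    {P : F[X]} (hP : P.natDegree < s) : ∑ i, v i * x i * P.eval (α i) = 0 := by
  simp_rw [eval_eq_sum_range' hP, mul_sum]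
  rw [sum_comm]
  refine sum_eq_zero fun j hj => ?_
  have := mem_grsDual.mp hx ⟨j, mem_range.mp hj⟩
  rw [← mul_zero (P.coeff j), ← this, mul_sum]
  exact sum_congr rfl fun i _ => by ring

theorem lt_wt_of_mem_grsDual (hα : Function.Injective α) (hv : ∀ i, v i ≠ 0)
    {x : Fin n → F} (hx : x ∈ grsDual α v s) (hx0 : x ≠ 0) : s < wt x := by
  classical
  set T := univ.filter fun i => x i ≠ 0
  have hwt : wt x = T.card := by
    rw [wt, Set.ncard_eq_toFinset_card', Set.toFinset_ofPred]
  obtain ⟨i₀, hi₀⟩ := Function.ne_iff.mp hx0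
  have hi₀T : i₀ ∈ T := by simpa [T] using hi₀
  by_contra! hle
  -- the Lagrange basis polynomial at `i₀` singles out the `i₀`-th term of the sum
  set P := Lagrange.basis T α i₀
  have hP : P.natDegree < s := by
    rw [Lagrange.natDegree_basis hα.injOn hi₀T]
    have := card_pos.mpr ⟨i₀, hi₀T⟩
    omega
  have hsum := sum_mul_eval_eq_zero_of_mem_grsDual hx hP
  rw [sum_eq_single i₀ (fun i _ hi => ?_) (by simp),
    Lagrange.eval_basis_self hα.injOn hi₀T, mul_one] at hsum
  · exact mul_ne_zero (hv i₀) hi₀ hsum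
  · by_cases hxi : x i = 0
    · simp [hxi]
    · rw [Lagrange.eval_basis_of_ne (Ne.symm hi) (by simpa [T] using hxi), mul_zero]

theorem finrank_grsDual (hα : Function.Injective α) (hv : ∀ i, v i ≠ 0) (hs : s ≤ n) :
    Module.finrank F (grsDual α v s) = n - s := by
  refine le_antisymm ?_ ?_
  · by_contra! h
    obtain ⟨x, hx, hx0, hwt⟩ := exists_ne_zero_wt_le_of_lt_finrank_add (grsDual α v s) hs
      (by omega)
    exact absurd (lt_wt_of_mem_grsDual hα hv hx hx0) (not_lt.mpr hwt)
  · have hrank := LinearMap.finrank_range_add_finrank_ker (grsMatrix α v s).mulVecLin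
    have hle := (LinearMap.range (grsMatrix α v s).mulVecLin).finrank_le
    rw [Module.finrank_fin_fun] at hrank hle
    rw [grsDual]
    omega

theorem isLeast_wt_grsDual (hα : Function.Injective α) (hv : ∀ i, v i ≠ 0) (hsn : s < n) :
    IsLeast {d : ℕ | ∃ x ∈ grsDual α v s, x ≠ 0 ∧ wt x = d} (s + 1) := by
  refine ⟨?_, fun d ⟨x, hx, hx0, hd⟩ => hd ▸ lt_wt_of_mem_grsDual hα hv hx hx0⟩
  obtain ⟨x, hx, hx0, hwt⟩ := exists_ne_zero_wt_le_of_lt_finrank_add (grsDual α v s) hsn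
    (by rw [finrank_grsDual hα hv hsn.le]; omega)
  exact ⟨x, hx, hx0, le_antisymm hwt (lt_wt_of_mem_grsDual hα hv hx hx0)⟩

theorem dualH_grsDual_le {q : ℕ} [Fintype F] (hF : Fintype.card F = q ^ 2)
    (hherm : ∀ j k : Fin s, ∑ i, v i ^ (q + 1) * α i ^ ((j : ℕ) * q + k) = 0) :
    dualH q n (grsDual α v s) ≤ grsDual α v s := by
  intro x hx
  refine mem_grsDual.mpr fun k => ?_
  -- `y := (v α^k)^q` lies in the code, and `y^q = v α^k` because `z^(q^2) = z` on `F`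
  have hy : (fun i => (v i * α i ^ (k : ℕ)) ^ q) ∈ grsDual α v s := by
    refine mem_grsDual.mpr fun j => ?_
    rw [← hherm k j]
    exact sum_congr rfl fun i _ => by ring
  rw [← hx _ hy]
  refine sum_congr rfl fun i _ => ?_
  rw [← pow_mul, ← sq, ← hF, FiniteField.pow_card, mul_comm]

theorem exists_hermitian_mds_code_of_sum_eq_zero {q : ℕ} [Fintype F] (hF : Fintype.card F = q ^ 2)
    (hα : Function.Injective α) (hv : ∀ i, v i ≠ 0) (hsn : s < n)
    (hherm : ∀ j k : Fin s, ∑ i, v i ^ (q + 1) * α i ^ ((j : ℕ) * q + k) = 0) :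
    ∃ C : Submodule F (Fin n → F), dualH q n C ≤ C ∧ Module.finrank F C = n - s ∧
      IsLeast {d : ℕ | ∃ x ∈ C, x ≠ 0 ∧ wt x = d} (s + 1) :=
  ⟨grsDual α v s, dualH_grsDual_le hF hherm, finrank_grsDual hα hv hsn.le,
    isLeast_wt_grsDual hα hv hsn⟩

end GRS

section FiniteField

variable {F : Type*} [Field F] [Fintype F]

theorem exists_isPrimitiveRoot_card_sub_one :
    ∃ G : F, IsPrimitiveRoot G (Fintype.card F - 1) := by
  classical
  obtain ⟨g, hg⟩ := IsCyclic.exists_generator (α := Fˣ)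
  refine ⟨g, ?_⟩
  rw [← Fintype.card_units, ← Nat.card_eq_fintype_card,
    ← orderOf_eq_card_of_forall_mem_zpowers hg, ← orderOf_units]
  exact IsPrimitiveRoot.orderOf _

theorem exists_ringHom_eq_pow_of_dvd_card {q : ℕ} (hq : q ∣ Fintype.card F) :
    ∃ φ : F →+* F, ∀ x, φ x = x ^ q := by
  obtain ⟨n, hp, hcard⟩ := FiniteField.card F (ringChar F)
  have : Fact (ringChar F).Prime := ⟨hp⟩
  obtain ⟨m, -, rfl⟩ := (Nat.dvd_prime_pow hp).mp (hcard ▸ hq)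
  exact ⟨iterateFrobenius F (ringChar F) m, iterateFrobenius_def _ _⟩

theorem natCast_ne_zero_of_dvd_card_sub_one {t : ℕ} (ht : t ∣ Fintype.card F - 1) :
    (t : F) ≠ 0 := by
  intro h
  obtain ⟨k, hk⟩ := ht
  have : ((Fintype.card F - 1 : ℕ) : F) = 0 := by rw [hk, Nat.cast_mul, h, zero_mul]
  rw [Nat.cast_sub Fintype.card_pos, FiniteField.cast_card_eq_zero, Nat.cast_one, zero_sub,
    neg_eq_zero] at this
  exact one_ne_zero this

theorem pow_succ_pow_eq_self {q : ℕ} (hF : Fintype.card F = q ^ 2) (x : F) :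
    (x ^ (q + 1)) ^ q = x ^ (q + 1) := by
  rw [← pow_mul, show (q + 1) * q = q ^ 2 + q by ring, pow_add, ← hF, FiniteField.pow_card,
    pow_succ']

theorem exists_pow_succ_eq {q : ℕ} (hF : Fintype.card F = q ^ 2) {z : F} (hz : z ≠ 0)
    (hzq : z ^ q = z) : ∃ η : F, η ^ (q + 1) = z := by
  obtain ⟨G, hG⟩ := exists_isPrimitiveRoot_card_sub_one (F := F)
  have hq : 2 ≤ q := by
    have := Fintype.one_lt_card (α := F)
    by_contra!
    interval_cases q <;> simp_all
  have : NeZero (q - 1) := ⟨by omega⟩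
  -- `z` is a `(q-1)`-th root of unity, and `G^(q+1)` generates those
  have hG' : IsPrimitiveRoot (G ^ (q + 1)) (q - 1) :=
    hG.pow (by rw [hF]; exact Nat.sub_pos_of_lt (by nlinarith))
      (by rw [hF, ← Nat.sq_sub_sq, one_pow])
  have hz1 : z ^ (q - 1) = 1 := by
    refine mul_right_cancel₀ hz ?_
    rw [← pow_succ, Nat.sub_add_cancel (by omega), hzq, one_mul]
  obtain ⟨i, -, hi⟩ := hG'.eq_pow_of_pow_eq_one hz1
  exact ⟨G ^ i, by rw [← hi, ← pow_mul, ← pow_mul, mul_comm]⟩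

end FiniteField

def cosetPoints {F : Type*} [Field F] (G : F) (d r t : ℕ) (i : Fin (r * t)) : F :=
  G ^ ((finProdFinEquiv.symm i).1 : ℕ) * (G ^ d) ^ ((finProdFinEquiv.symm i).2 : ℕ)

section Cosets

variable {F : Type*} [Field F] {r t : ℕ}

theorem sum_mul_pow_coset_eq_zero {ζ : F} (hζ : IsPrimitiveRoot ζ t) (β c : Fin r → F)
    {m : ℕ} (hm0 : m ≠ 0) (hmt : m < t) :
    ∑ p : Fin r × Fin t, c p.1 * (β p.1 * ζ ^ (p.2 : ℕ)) ^ m = 0 := by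
  have hgeom : ∑ b ∈ range t, (ζ ^ m) ^ b = 0 := by
    rw [geom_sum_eq (hζ.pow_ne_one_of_pos_of_lt hm0 hmt), ← pow_mul, mul_comm, pow_mul,
      hζ.pow_eq_one, one_pow, sub_self, zero_div]
  rw [Fintype.sum_prod_type]
  refine sum_eq_zero fun a _ => ?_
  calc ∑ b : Fin t, c a * (β a * ζ ^ (b : ℕ)) ^ m
      = c a * β a ^ m * ∑ b ∈ range t, (ζ ^ m) ^ b := by
        rw [mul_sum, ← Fin.sum_univ_eq_sum_range]
        exact sum_congr rfl fun b _ => by ring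
    _ = 0 := by rw [hgeom, mul_zero]

theorem injective_pow_mul_pow_pow {G : F} {d : ℕ} (hG : IsPrimitiveRoot G (d * t))
    (hrd : r ≤ d) :
    Function.Injective fun p : Fin r × Fin t => G ^ (p.1 : ℕ) * (G ^ d) ^ (p.2 : ℕ) := by
  have hlt : ∀ p : Fin r × Fin t, (p.1 : ℕ) + d * p.2 < d * t := fun p => by
    nlinarith [p.1.2, p.2.2]
  intro p p' h
  simp only [← pow_mul, ← pow_add] at h
  have h := hG.pow_inj (hlt p) (hlt p') h
  have ha : (p.1 : ℕ) = p'.1 := by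
    simpa [Nat.add_mul_mod_self_left, Nat.mod_eq_of_lt (p.1.2.trans_le hrd),
      Nat.mod_eq_of_lt (p'.1.2.trans_le hrd)] using congrArg (· % d) h
  have hd : 0 < d := by have := p.1.2; omega
  exact Prod.ext (Fin.ext ha) (Fin.ext (Nat.eq_of_mul_eq_mul_left hd (by omega)))

variable {G : F} {d : ℕ}

theorem injective_cosetPoints (hG : IsPrimitiveRoot G (d * t)) (hrd : r ≤ d) :
    Function.Injective (cosetPoints G d r t) :=
  (injective_pow_mul_pow_pow hG hrd).comp finProdFinEquiv.symm.injective

theorem cosetPoints_ne_zero (hG : IsPrimitiveRoot G (d * t)) (hd : d ≠ 0) (i : Fin (r * t)) :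
    cosetPoints G d r t i ≠ 0 := by
  have hG0 : G ≠ 0 := hG.ne_zero (mul_ne_zero hd (right_ne_zero_of_mul i.pos.ne'))
  exact mul_ne_zero (pow_ne_zero _ hG0) (pow_ne_zero _ (pow_ne_zero _ hG0))

theorem sum_mul_cosetPoints_pow_eq_zero (hG : IsPrimitiveRoot G (d * t)) (hd : d ≠ 0)
    (c : Fin r → F) {m : ℕ} (hm0 : m ≠ 0) (hmt : m < t) :
    ∑ i, c (finProdFinEquiv.symm i).1 * cosetPoints G d r t i ^ m = 0 := by
  have hζ : IsPrimitiveRoot (G ^ d) t :=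
    hG.pow (Nat.pos_of_ne_zero (mul_ne_zero hd (by omega))) rfl
  have := sum_mul_pow_coset_eq_zero hζ (fun a => G ^ (a : ℕ)) c hm0 hmt
  rwa [← Equiv.sum_comp finProdFinEquiv.symm] at this

end Cosets

section Construction

variable {F : Type*} [Field F] [Fintype F] {q d r t s : ℕ}

theorem val_mul_add_val_add_succ_le (j k : Fin s) :
    (j : ℕ) * q + k + (q + 1) ≤ s * (q + 1) := by
  nlinarith [j.2, k.2]

theorem exists_weights_pow_succ_add_mul_sum_eq_zero (hF : Fintype.card F = q ^ 2) (hq : 3 ≤ q)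
    (hr : 0 < r) (ht : t ∣ q ^ 2 - 1) :
    ∃ (c : Fin r → F) (η : F), (∀ a, c a ≠ 0) ∧ η ≠ 0 ∧
      η ^ (q + 1) + t * ∑ a, c a ^ (q + 1) = 0 := by
  obtain ⟨G, hG⟩ := exists_isPrimitiveRoot_card_sub_one (F := F)
  rw [hF] at hG
  have hN : q + 1 < q ^ 2 - 1 := by
    have := Nat.mul_le_mul_right q hq
    rw [sq]
    omega
  obtain ⟨c, hc, hS⟩ :
      ∃ c : Fin r → F, (∀ a, c a ≠ 0) ∧ ∑ a, c a ^ (q + 1) ≠ 0 := by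
    obtain ⟨r, rfl⟩ : ∃ r', r = r' + 1 := ⟨r - 1, by omega⟩
    by_cases hr : (r : F) + 1 = 0
    · refine ⟨Fin.cons G 1, Fin.cases (hG.ne_zero (by omega)) fun _ => one_ne_zero, ?_⟩
      have hG1 : G ^ (q + 1) ≠ 1 := hG.pow_ne_one_of_pos_of_lt (by omega) hN
      simp only [Fin.sum_univ_succ, Fin.cons_zero, Fin.cons_succ, Pi.one_apply, one_pow,
        sum_const, card_univ, Fintype.card_fin, nsmul_eq_mul, mul_one]
      rw [eq_neg_of_add_eq_zero_left hr]
      exact fun h => hG1 (by linear_combination h)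
    · exact ⟨1, fun _ => one_ne_zero, by simpa using hr⟩
  obtain ⟨φ, hφ⟩ := exists_ringHom_eq_pow_of_dvd_card (hF ▸ dvd_pow_self q two_ne_zero)
  set z : F := -(t * ∑ a, c a ^ (q + 1))
  -- `z` lies in the subfield `𝔽_q`, hence is a norm `η ^ (q + 1)`
  have hzq : z ^ q = z := by
    rw [← hφ]
    simp only [z, map_neg, map_mul, map_natCast, map_sum]
    simp only [hφ, pow_succ_pow_eq_self hF]
  have hz : z ≠ 0 :=
    neg_ne_zero.mpr (mul_ne_zero (natCast_ne_zero_of_dvd_card_sub_one (hF ▸ ht)) hS)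
  obtain ⟨η, hη⟩ := exists_pow_succ_eq hF hz hzq
  refine ⟨c, η, hc, fun h => hz ?_, by rw [hη]; ring⟩
  rw [← hη, h, zero_pow (Nat.succ_ne_zero q)]

theorem exists_hermitian_mds_code_length_mul {G : F} (hF : Fintype.card F = q ^ 2)
    (hG : IsPrimitiveRoot G (d * t)) (hr : 0 < r) (hrd : r ≤ d) (hst : s * (q + 1) < t) :
    ∃ C : Submodule F (Fin (r * t) → F), dualH q (r * t) C ≤ C ∧
      Module.finrank F C = r * t - s ∧
      IsLeast {w : ℕ | ∃ x ∈ C, x ≠ 0 ∧ wt x = w} (s + 1) := by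
  have hd : d ≠ 0 := by omega
  refine exists_hermitian_mds_code_of_sum_eq_zero hF (injective_cosetPoints hG hrd)
    (cosetPoints_ne_zero hG hd) (by nlinarith) fun j k => ?_
  have := val_mul_add_val_add_succ_le (q := q) j k
  rw [← sum_mul_cosetPoints_pow_eq_zero hG hd 1 (m := j * q + k + (q + 1)) (by omega) (by omega)]
  exact sum_congr rfl fun i _ => by rw [Pi.one_apply, one_mul, ← pow_add, add_comm]

theorem exists_hermitian_mds_code_length_mul_add_one {G : F} (hF : Fintype.card F = q ^ 2)
    (hG : IsPrimitiveRoot G (d * t)) (ht : t ∣ q ^ 2 - 1) (hq : 3 ≤ q) (hr : 0 < r)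
    (hrd : r ≤ d) (hst : s * (q + 1) < t) :
    ∃ C : Submodule F (Fin (r * t + 1) → F), dualH q (r * t + 1) C ≤ C ∧
      Module.finrank F C = r * t + 1 - s ∧
      IsLeast {w : ℕ | ∃ x ∈ C, x ≠ 0 ∧ wt x = w} (s + 1) := by
  have hd : d ≠ 0 := by omega
  obtain ⟨c, η, hc, hη0, hη⟩ := exists_weights_pow_succ_add_mul_sum_eq_zero hF hq hr ht
  refine exists_hermitian_mds_code_of_sum_eq_zero (α := Fin.cons 0 (cosetPoints G d r t))
    (v := Fin.cons η fun i => c (finProdFinEquiv.symm i).1) hF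
    (Fin.cons_injective_iff.mpr ⟨fun ⟨i, hi⟩ => cosetPoints_ne_zero hG hd i hi,
      injective_cosetPoints hG hrd⟩)
    (Fin.cases hη0 fun _ => hc _) (by nlinarith) fun j k => ?_
  have := val_mul_add_val_add_succ_le (q := q) j k
  simp only [Fin.sum_univ_succ, Fin.cons_zero, Fin.cons_succ]
  rcases Nat.eq_zero_or_pos ((j : ℕ) * q + k) with hm | hm
  · have hsum : ∑ i : Fin (r * t), c (finProdFinEquiv.symm i).1 ^ (q + 1)
        = t * ∑ a, c a ^ (q + 1) := by
      rw [Equiv.sum_comp finProdFinEquiv.symm fun p => c p.1 ^ (q + 1), Fintype.sum_prod_type]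
      simp [mul_sum]
    simp only [hm, pow_zero, mul_one, hsum, hη]
  · rw [zero_pow hm.ne', mul_zero, zero_add]
    exact sum_mul_cosetPoints_pow_eq_zero hG hd (fun a => c a ^ (q + 1)) hm.ne' (by omega)

end Construction

theorem stmt_13_general (q : ℕ)
    (F : Type*) [Field F] [Fintype F] (hF : Fintype.card F = q ^ 2)
    (t : ℕ) (ht : t ∣ q ^ 2 - 1) (r s : ℕ) (hr1 : 1 ≤ r)
    (hr2 : r ≤ (q ^ 2 - 1) / t) (hs1 : 1 ≤ s) (hs2 : s ≤ (t - 1) / (q + 1)) :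
    (∃ C : Submodule F (Fin (r * t) → F),
      dualH q (r * t) C ≤ C ∧
      Module.finrank F C = r * t - s ∧
      IsLeast {d : ℕ | ∃ x ∈ C, x ≠ 0 ∧ wt x = d} (s + 1)) ∧
    (∃ C : Submodule F (Fin (r * t + 1) → F),
      dualH q (r * t + 1) C ≤ C ∧
      Module.finrank F C = r * t + 1 - s ∧
      IsLeast {d : ℕ | ∃ x ∈ C, x ≠ 0 ∧ wt x = d} (s + 1)) := by
  have hst : s * (q + 1) < t := by
    have := (Nat.le_div_iff_mul_le (by omega)).mp hs2
    have := Nat.le_mul_of_pos_left (q + 1) hs1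
    omega
  obtain ⟨G, hG⟩ := exists_isPrimitiveRoot_card_sub_one (F := F)
  have hdt : q ^ 2 - 1 = (q ^ 2 - 1) / t * t := (Nat.div_mul_cancel ht).symm
  rw [hF, hdt] at hG
  have hq : 3 ≤ q := by
    have := Nat.le_mul_of_pos_left t (hr1.trans hr2)
    by_contra!
    interval_cases q <;> omega
  exact ⟨exists_hermitian_mds_code_length_mul hF hG hr1 hr2 hst,
    exists_hermitian_mds_code_length_mul_add_one hF hG ht hq hr1 hr2 hst⟩

/-- for t a positive divisor of q²−1, r ≤ (q²−1)/t and
s ≤ (t−1)/(q+1), there exist [n, n−s, s+1]_{q²} Hermitian dual-containing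
codes for both n = rt and n = rt + 1. -/
theorem stmt_13 (q : ℕ) (hpp : IsPrimePow q)
    (F : Type*) [Field F] [Fintype F] (hF : Fintype.card F = q ^ 2)
    (t : ℕ) (ht0 : 0 < t) (ht : t ∣ q ^ 2 - 1) (r s : ℕ) (hr1 : 1 ≤ r)
    (hr2 : r ≤ (q ^ 2 - 1) / t) (hs1 : 1 ≤ s) (hs2 : s ≤ (t - 1) / (q + 1)) :
    (∃ C : Submodule F (Fin (r * t) → F),
      dualH q (r * t) C ≤ C ∧
      Module.finrank F C = r * t - s ∧
      IsLeast {d : ℕ | ∃ x ∈ C, x ≠ 0 ∧ wt x = d} (s + 1)) ∧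
    (∃ C : Submodule F (Fin (r * t + 1) → F),
      dualH q (r * t + 1) C ≤ C ∧
      Module.finrank F C = r * t + 1 - s ∧
      IsLeast {d : ℕ | ∃ x ∈ C, x ≠ 0 ∧ wt x = d} (s + 1)) :=
  stmt_13_general q F hF t ht r s hr1 hr2 hs1 hs2
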